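/- If a semigroup X is projectively TzS-closed and projectively TzS-discrete, then the semilattice reflection X/⇕ and the set VE(X) of viable idempotents are finite. -/

import Mathlib

universe u

open Set TopologicalSpace

/-- A topological space is zero-dimensional: it has a base of clopen sets. -/
def HasClopenBasis (Y : Type*) [TopologicalSpace Y] : Prop :=
  ∃ B : Set (Set Y), (∀ s ∈ B, IsClopen s) ∧ IsTopologicalBasis B

section TopClasses

variable (X : Type u) [Semigroup X]

/-- `X` is absolutely `T₁S`-closed: the image of every homomorphism to a `T₁`
topological semigroup is closed. -/
def AbsolutelyT1SClosed : Prop :=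
  ∀ (Y : Type u) [Semigroup Y] [TopologicalSpace Y] [ContinuousMul Y] [T1Space Y]
    (h : X →ₙ* Y), IsClosed (Set.range h)

/-- `X` is absolutely `T₂S`-closed. -/
def AbsolutelyT2SClosed : Prop :=
  ∀ (Y : Type u) [Semigroup Y] [TopologicalSpace Y] [ContinuousMul Y] [T2Space Y]
    (h : X →ₙ* Y), IsClosed (Set.range h)

/-- `X` is absolutely `TzS`-closed. -/
def AbsolutelyTzSClosed : Prop :=
  ∀ (Y : Type u) [Semigroup Y] [TopologicalSpace Y] [ContinuousMul Y] [T1Space Y],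
    HasClopenBasis Y → ∀ (h : X →ₙ* Y), IsClosed (Set.range h)

/-- `X` is `T₁S`-closed: the image of every injective homomorphism to a `T₁`
topological semigroup with discrete image is closed. -/
def T1SClosed : Prop :=
  ∀ (Y : Type u) [Semigroup Y] [TopologicalSpace Y] [ContinuousMul Y] [T1Space Y]
    (h : X →ₙ* Y), Function.Injective h → DiscreteTopology (Set.range h) →
      IsClosed (Set.range h)

/-- `X` is `T₂S`-closed. -/
def T2SClosed : Prop :=
  ∀ (Y : Type u) [Semigroup Y] [TopologicalSpace Y] [ContinuousMul Y] [T2Space Y]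
    (h : X →ₙ* Y), Function.Injective h → DiscreteTopology (Set.range h) →
      IsClosed (Set.range h)

/-- `X` is `TzS`-closed. -/
def TzSClosed : Prop :=
  ∀ (Y : Type u) [Semigroup Y] [TopologicalSpace Y] [ContinuousMul Y] [T1Space Y],
    HasClopenBasis Y → ∀ (h : X →ₙ* Y), Function.Injective h →
      DiscreteTopology (Set.range h) → IsClosed (Set.range h)

/-- `X` is injectively `T₂S`-closed. -/
def InjectivelyT2SClosed : Prop :=
  ∀ (Y : Type u) [Semigroup Y] [TopologicalSpace Y] [ContinuousMul Y] [T2Space Y]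
    (h : X →ₙ* Y), Function.Injective h → IsClosed (Set.range h)

/-- `X` is projectively `T₁S`-closed: all congruence quotients are `T₁S`-closed. -/
def ProjectivelyT1SClosed : Prop := ∀ c : Con X, T1SClosed c.Quotient

/-- `X` is projectively `TzS`-closed. -/
def ProjectivelyTzSClosed : Prop := ∀ c : Con X, TzSClosed c.Quotient

/-- `X` is projectively `T₁S`-discrete: every homomorphism into a `T₁`
topological semigroup has discrete image. -/
def ProjectivelyT1SDiscrete : Prop :=
  ∀ (Y : Type u) [Semigroup Y] [TopologicalSpace Y] [ContinuousMul Y] [T1Space Y]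
    (h : X →ₙ* Y), DiscreteTopology (Set.range h)

/-- `X` is projectively `TzS`-discrete. -/
def ProjectivelyTzSDiscrete : Prop :=
  ∀ (Y : Type u) [Semigroup Y] [TopologicalSpace Y] [ContinuousMul Y] [T1Space Y],
    HasClopenBasis Y → ∀ (h : X →ₙ* Y), DiscreteTopology (Set.range h)

end TopClasses

/-- `spow x n` is the power `x^(n+1)` in a semigroup; thus as `n` ranges over `ℕ`,
`spow x n` ranges over all powers `x^m`, `m ≥ 1`. -/
def spow {X : Type*} [Semigroup X] (x : X) : ℕ → X
  | 0 => x
  | n + 1 => spow x n * x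

section AlgDefs

variable (X : Type*) [Semigroup X]

/-- the set `E(X)` of idempotents. -/
def idemSet : Set X := {x | x * x = x}

/-- `H_e`, the maximal subgroup containing the idempotent `e`. -/
def maxSubgroup (e : X) : Set X :=
  {x | x * e = x ∧ e * x = x ∧ ∃ y, y * e = y ∧ e * y = y ∧ x * y = e ∧ y * x = e}

/-- The Clifford part `H(X) = ⋃_{e ∈ E(X)} H_e`. -/
def cliffordPart : Set X := ⋃ e ∈ idemSet X, maxSubgroup X e

/-- `H_e/e := {x : xe = ex ∈ H_e}`. -/
def HeCoideal (e : X) : Set X := {x | x * e = e * x ∧ x * e ∈ maxSubgroup X e}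

/-- `I` is an ideal of the semigroup `X`. -/
def IsIdealSet (I : Set X) : Prop := ∀ x ∈ I, ∀ y : X, x * y ∈ I ∧ y * x ∈ I

/-- The set `VE(X)` of viable idempotents: `e` is idempotent and `X ∖ (H_e/e)` is an ideal. -/
def viableIdems : Set X := {e | e ∈ idemSet X ∧ IsIdealSet X (Set.univ \ HeCoideal X e)}

/-- The center `Z(X)`. -/
def centerSet : Set X := {z | ∀ x, z * x = x * z}

/-- `√A = {x : xⁿ ∈ A for some n ≥ 1}`. -/
def sqrtSet (A : Set X) : Set X := {x | ∃ n : ℕ, spow x n ∈ A}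

/-- A subset `B ⊆ X` is bounded: there is `n ≥ 1` with `xⁿ` idempotent for all `x ∈ B`. -/
def BoundedSet (B : Set X) : Prop := ∃ n : ℕ, ∀ x ∈ B, spow x n ∈ idemSet X

/-- The semigroup `X` is bounded. -/
def BoundedSemigroup : Prop := ∃ n : ℕ, ∀ x : X, spow x n ∈ idemSet X

/-- `X` is chain-finite. -/
def ChainFinite : Prop :=
  ∀ I : Set X, I.Infinite → ∃ x ∈ I, ∃ y ∈ I, x * y ≠ x ∧ x * y ≠ y

/-- `G ⊆ X` is a subgroup of the semigroup `X`. -/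
def IsSubgroupSet (G : Set X) : Prop :=
  (∀ x ∈ G, ∀ y ∈ G, x * y ∈ G) ∧
    ∃ e ∈ G, (∀ x ∈ G, x * e = x ∧ e * x = x) ∧ ∀ x ∈ G, ∃ y ∈ G, x * y = e ∧ y * x = e

/-- `X` is group-finite: all its subgroups are finite. -/
def GroupFinite : Prop := ∀ G : Set X, IsSubgroupSet X G → G.Finite

/-- `X` is Clifford+finite: `X ∖ H(X)` is finite. -/
def CliffordPlusFinite : Prop := (Set.univ \ cliffordPart X).Finite

/-- `X` is `E`-commutative: idempotents commute. -/
def ECommutative : Prop := ∀ x ∈ idemSet X, ∀ y ∈ idemSet X, x * y = y * x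

end AlgDefs

/-- The Rees congruence associated with an ideal `I` of `X`. -/
def ReesCon {X : Type*} [Semigroup X] (I : Set X) (hI : IsIdealSet X I) : Con X where
  r x y := x = y ∨ (x ∈ I ∧ y ∈ I)
  iseqv :=
    { refl := fun _ => Or.inl rfl
      symm := by rintro x y (rfl | ⟨h1, h2⟩); exacts [Or.inl rfl, Or.inr ⟨h2, h1⟩]
      trans := by
        rintro x y z (rfl | ⟨h1, h2⟩) (rfl | ⟨h3, h4⟩)
        exacts [Or.inl rfl, Or.inr ⟨h3, h4⟩, Or.inr ⟨h1, h2⟩, Or.inr ⟨h1, h4⟩] }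
  mul' := by
    rintro a b c d (rfl | ⟨h1, h2⟩) (rfl | ⟨h3, h4⟩)
    · exact Or.inl rfl
    · exact Or.inr ⟨(hI c h3 a).2, (hI d h4 a).2⟩
    · exact Or.inr ⟨(hI a h1 c).1, (hI b h2 c).1⟩
    · exact Or.inr ⟨(hI a h1 c).1, (hI b h2 d).1⟩

/-- `X` is ideally `T₂S`-closed: all its Rees quotients are `T₂S`-closed. -/
def IdeallyT2SClosed (X : Type u) [Semigroup X] : Prop :=
  ∀ (I : Set X) (hI : IsIdealSet X I), T2SClosed (ReesCon I hI).Quotient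

/-- `X` is ideally `TzS`-closed. -/
def IdeallyTzSClosed (X : Type u) [Semigroup X] : Prop :=
  ∀ (I : Set X) (hI : IsIdealSet X I), TzSClosed (ReesCon I hI).Quotient

/-- A congruence is a semilattice congruence if its quotient is a commutative
semigroup of idempotents. -/
def IsSemilatticeCon {X : Type*} [Semigroup X] (c : Con X) : Prop :=
  (∀ a b : c.Quotient, a * b = b * a) ∧ ∀ a : c.Quotient, a * a = a

/-- The smallest semilattice congruence `⇕` on `X`, the intersection of all
semilattice congruences. -/
def slCon (X : Type*) [Semigroup X] : Con X := sInf {c | IsSemilatticeCon c}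

theorem centerSet_mul_mem {X : Type*} [Semigroup X] {a b : X}
    (ha : a ∈ centerSet X) (hb : b ∈ centerSet X) : a * b ∈ centerSet X := fun t => by
  rw [mul_assoc, hb t, ← mul_assoc, ha t, mul_assoc]

/-- The ideal center `IZ(X) = {z ∈ Z(X) : zX ⊆ Z(X)}`, as a subsemigroup of `X`. -/
def idealCenter (X : Type*) [Semigroup X] : Subsemigroup X where
  carrier := {z | z ∈ centerSet X ∧ ∀ x : X, z * x ∈ centerSet X}
  mul_mem' := by
    rintro a b ⟨ha, ha'⟩ ⟨hb, hb'⟩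
    refine ⟨centerSet_mul_mem ha hb, fun x => ?_⟩
    have h : a * b * x = a * (b * x) := mul_assoc a b x
    rw [h]
    exact centerSet_mul_mem ha (hb' x)

/-- Evaluation of the semigroup polynomial with coefficients `a, l = [a₁, …, aₙ]`:
`x ↦ a * x * a₁ * x * ⋯ * x * aₙ` (computed in `X¹ = WithOne X`). -/
def polyEval {X : Type*} [Semigroup X] (a : WithOne X) (l : List (WithOne X)) (x : X) :
    WithOne X :=
  l.foldl (fun acc b => acc * (x : WithOne X) * b) a

/-- `f : X → X¹` is a semigroup polynomial of degree `d ≥ 1`. -/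
def IsSemigroupPolynomial {X : Type*} [Semigroup X] (f : X → WithOne X) (d : ℕ) : Prop :=
  1 ≤ d ∧ ∃ (a : WithOne X) (l : List (WithOne X)), l.length = d ∧ ∀ x, f x = polyEval a l x

/-- `X` is polybounded. -/
def Polybounded (X : Type*) [Semigroup X] : Prop :=
  ∃ (k : ℕ) (f : Fin k → X → WithOne X) (d : Fin k → ℕ) (b : Fin k → X),
    (∀ i, IsSemigroupPolynomial (f i) (d i)) ∧ ∀ x : X, ∃ i, f i x = (b i : WithOne X)

/-- `X` is polyfinite. -/
def Polyfinite (X : Type*) [Semigroup X] : Prop :=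
  ∃ (d : ℕ) (F : Set X), F.Finite ∧ ∀ x y : X,
    ∃ (f : X → WithOne X) (m : ℕ), m ≤ d ∧ IsSemigroupPolynomial f m ∧
      (∃ u ∈ F, f x = (u : WithOne X)) ∧ ∃ v ∈ F, f y = (v : WithOne X)

/-- `X` is `B`-centrobounded over `B ⊆ E(X)`: there is `n ≥ 1` such that for every
`e ∈ B` and all `x, y ∈ ⋂_{a ∈ B} H_a/a`, if `w` is the inverse of `y*e` in the group
`H_e` and `(x*e)*w ∈ H_e ∩ Z(X)`, then `((x*e)*w)ⁿ` is an idempotent. -/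
def Centrobounded {X : Type*} [Semigroup X] (B : Set X) : Prop :=
  ∃ n : ℕ, ∀ e ∈ B, ∀ x ∈ ⋂ a ∈ B, HeCoideal X a, ∀ y ∈ ⋂ a ∈ B, HeCoideal X a,
    ∀ w ∈ maxSubgroup X e, (y * e) * w = e → w * (y * e) = e →
      (x * e) * w ∈ maxSubgroup X e → (x * e) * w ∈ centerSet X →
        spow ((x * e) * w) n ∈ idemSet X

/-- `B` is an antichain in the natural partial order `e ≤ f ⇔ ef = fe = e` on idempotents. -/
def IsIdemAntichain {X : Type*} [Semigroup X] (B : Set X) : Prop :=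
  ∀ e ∈ B, ∀ f ∈ B, e ≠ f → ¬(e * f = e ∧ f * e = e) ∧ ¬(e * f = f ∧ f * e = f)

/-!
A semilattice `S` embeds into the compact zero-dimensional semigroup `S → Bool` by sending `s` to
the indicator of its down-set `{t | t * s = t}`. For `S = X/⇕` the image of this embedding is
discrete (projective `TzS`-discreteness) and closed (`TzS`-closedness of `S`), hence compact and
discrete, hence finite.

For a viable idempotent `e`, `X ∖ (H_e/e)` being an ideal makes the indicator of `H_e/e` a
homomorphism to the semilattice `Bool`, so `e ⇕ f` forces `f ∈ H_e/e` and `e ∈ H_f/f`. Then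
`fe = ef` is an idempotent of both `H_e` and `H_f`, whence `e = fe = ef = f`; thus `VE(X)` injects
into `X/⇕`.
-/

theorem isSemilatticeCon_iff {X : Type*} [Semigroup X] (c : Con X) :
    IsSemilatticeCon c ↔ ∀ x y : X, c (x * y) (y * x) ∧ c (x * x) x := by
  refine ⟨fun ⟨hcomm, hidem⟩ x y => ⟨(Con.eq c).1 (hcomm x y), (Con.eq c).1 (hidem x)⟩,
    fun h => ⟨fun a b => ?_, fun a => ?_⟩⟩
  · induction a using Con.induction_on
    induction b using Con.induction_on
    exact (Con.eq c).2 (h _ _).1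
  · induction a using Con.induction_on with
    | _ x => exact (Con.eq c).2 (h x x).2

theorem slCon_isSemilatticeCon (X : Type*) [Semigroup X] : IsSemilatticeCon (slCon X) :=
  (isSemilatticeCon_iff _).2 fun x y =>
    ⟨fun c hc => ((isSemilatticeCon_iff c).1 hc x y).1,
      fun c hc => ((isSemilatticeCon_iff c).1 hc x y).2⟩

theorem isSemilatticeCon_ker {X T : Type*} [Semigroup X] [Semigroup T]
    (hcomm : ∀ a b : T, a * b = b * a) (hidem : ∀ a : T, a * a = a) (f : X →ₙ* T) :
    IsSemilatticeCon (Con.ker f) :=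
  (isSemilatticeCon_iff _).2 fun x y => by
    simp only [Con.ker_rel, map_mul]
    exact ⟨hcomm _ _, hidem _⟩

theorem slCon_le_ker {X T : Type*} [Semigroup X] [Semigroup T]
    (hcomm : ∀ a b : T, a * b = b * a) (hidem : ∀ a : T, a * a = a) (f : X →ₙ* T) :
    slCon X ≤ Con.ker f :=
  sInf_le (isSemilatticeCon_ker hcomm hidem f)

section Semilattice

variable {S : Type*} [Semigroup S]

theorem mul_mul_eq_self_iff (hcomm : ∀ a b : S, a * b = b * a) (hidem : ∀ a : S, a * a = a)
    (t s s' : S) : t * (s * s') = t ↔ t * s = t ∧ t * s' = t := by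
  refine ⟨fun h => ⟨?_, ?_⟩, fun ⟨hs, hs'⟩ => by rw [← mul_assoc, hs, hs']⟩
  · calc t * s = t * (s * s') * s := by rw [h]
      _ = t * ((s * s) * s') := by rw [mul_assoc, mul_assoc, hcomm s' s, ← mul_assoc s]
      _ = t := by rw [hidem, h]
  · calc t * s' = t * (s * s') * s' := by rw [h]
      _ = t := by rw [mul_assoc, mul_assoc, hidem, h]

open Classical in
noncomputable def downsetHom (hcomm : ∀ a b : S, a * b = b * a) (hidem : ∀ a : S, a * a = a) :
    S →ₙ* (S → Bool) where
  toFun s t := decide (t * s = t)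
  map_mul' s s' := funext fun t => by
    simp only [mul_mul_eq_self_iff hcomm hidem, Bool.decide_and, Pi.mul_apply]
    rfl

theorem downsetHom_injective (hcomm : ∀ a b : S, a * b = b * a) (hidem : ∀ a : S, a * a = a) :
    Function.Injective (downsetHom hcomm hidem) := by
  intro s s' h
  have hs : s * s' = s := by simpa [downsetHom, hidem] using congrFun h s
  have hs' : s' * s = s' := by simpa [downsetHom, hidem] using (congrFun h s').symm
  rw [← hs, hcomm, hs']

end Semilattice

theorem hasClopenBasis_of_compactSpace (Y : Type*) [TopologicalSpace Y] [T2Space Y]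
    [CompactSpace Y] [TotallyDisconnectedSpace Y] : HasClopenBasis Y :=
  ⟨{s | IsClopen s}, fun _ hs => hs, isTopologicalBasis_isClopen⟩

theorem ProjectivelyTzSClosed.finite_quotient {X : Type u} [Semigroup X]
    (h1 : ProjectivelyTzSClosed X) (h2 : ProjectivelyTzSDiscrete X) (c : Con X)
    {Y : Type u} [Semigroup Y] [TopologicalSpace Y] [ContinuousMul Y] [T1Space Y]
    [CompactSpace Y] (hY : HasClopenBasis Y) (j : c.Quotient →ₙ* Y)
    (hj : Function.Injective j) : Finite c.Quotient := by
  have hrange : Set.range (j.comp c.mkMulHom) = Set.range j :=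
    (Quotient.mk''_surjective : Function.Surjective c.mkMulHom).range_comp j
  have hdisc : DiscreteTopology (Set.range j) := hrange ▸ h2 Y hY (j.comp c.mkMulHom)
  have hclosed : IsClosed (Set.range j) := h1 c Y hY j hj hdisc
  have := (hclosed.isCompact.finite (isDiscrete_iff_discreteTopology.2 hdisc)).to_subtype
  exact Finite.of_injective (Set.rangeFactorization j) (Set.rangeFactorization_injective.2 hj)

section Viable

variable {X : Type*} [Semigroup X]

theorem mul_mem_maxSubgroup {e a b : X} (ha : a ∈ maxSubgroup X e)
    (hb : b ∈ maxSubgroup X e) : a * b ∈ maxSubgroup X e := by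
  obtain ⟨hae, hea, a', ha'e, hea', haa', ha'a⟩ := ha
  obtain ⟨hbe, heb, b', hb'e, heb', hbb', hb'b⟩ := hb
  refine ⟨by rw [mul_assoc, hbe], by rw [← mul_assoc, hea], b' * a',
    by rw [mul_assoc, ha'e], by rw [← mul_assoc, heb'], ?_, ?_⟩
  · rw [mul_assoc, ← mul_assoc b, hbb', hea', haa']
  · rw [mul_assoc, ← mul_assoc a', ha'a, heb, hb'b]

theorem eq_of_mem_maxSubgroup_of_mul_self {e z : X} (hz : z ∈ maxSubgroup X e)
    (h : z * z = z) : z = e := by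
  obtain ⟨hze, -, y, -, -, hzy, -⟩ := hz
  calc z = z * (z * y) := by rw [hzy, hze]
    _ = e := by rw [← mul_assoc, h, hzy]

theorem mem_HeCoideal_self {e : X} (he : e ∈ idemSet X) : e ∈ HeCoideal X e := by
  have hee : e * e = e := he
  exact ⟨rfl, by rw [hee]; exact ⟨hee, hee, e, hee, hee, hee, hee⟩⟩

theorem mul_mem_HeCoideal {e x y : X} (hx : x ∈ HeCoideal X e) (hy : y ∈ HeCoideal X e) :
    x * y ∈ HeCoideal X e := by
  obtain ⟨hxc, hxe⟩ := hx
  obtain ⟨hyc, hye⟩ := hy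
  have hright : x * y * e = (x * e) * (y * e) := by
    rw [mul_assoc x e, hye.2.1, mul_assoc]
  have hleft : e * (x * y) = (x * e) * (y * e) := by
    rw [← mul_assoc, ← hxc, hyc, ← mul_assoc (x * e) e y, hxe.1]
  exact ⟨hright.trans hleft.symm, hright ▸ mul_mem_maxSubgroup hxe hye⟩

theorem mul_mem_HeCoideal_iff {e : X} (he : e ∈ viableIdems X) (x y : X) :
    x * y ∈ HeCoideal X e ↔ x ∈ HeCoideal X e ∧ y ∈ HeCoideal X e := by
  refine ⟨fun h => ⟨by_contra fun hx => ?_, by_contra fun hy => ?_⟩,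
    fun ⟨hx, hy⟩ => mul_mem_HeCoideal hx hy⟩
  · exact (he.2 x ⟨trivial, hx⟩ y).1.2 h
  · exact (he.2 y ⟨trivial, hy⟩ x).2.2 h

open Classical in
noncomputable def heCoidealIndicator {e : X} (he : e ∈ viableIdems X) : X →ₙ* Bool where
  toFun x := decide (x ∈ HeCoideal X e)
  map_mul' x y := by
    simp only [mul_mem_HeCoideal_iff he, Bool.decide_and]
    rfl

theorem mem_HeCoideal_of_slCon {e f : X} (he : e ∈ viableIdems X) (h : slCon X e f) :
    f ∈ HeCoideal X e := by
  have := slCon_le_ker mul_comm Bool.and_self (heCoidealIndicator he) h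
  simpa [Con.ker_rel, heCoidealIndicator, mem_HeCoideal_self he.1] using this.symm

theorem eq_of_slCon_of_mem_viableIdems {e f : X} (he : e ∈ viableIdems X)
    (hf : f ∈ viableIdems X) (h : slCon X e f) : e = f := by
  obtain ⟨hfe, hfe_mem⟩ := mem_HeCoideal_of_slCon he h
  obtain ⟨-, hef_mem⟩ := mem_HeCoideal_of_slCon hf ((slCon X).symm h)
  have hidem : (f * e) * (f * e) = f * e :=
    IsIdempotentElem.mul_of_commute hfe hf.1 he.1
  calc e = f * e := (eq_of_mem_maxSubgroup_of_mul_self hfe_mem hidem).symm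
    _ = e * f := hfe
    _ = f := eq_of_mem_maxSubgroup_of_mul_self hef_mem (hfe ▸ hidem)

end Viable

theorem statement11 (X : Type u) [Semigroup X]
    (h1 : ProjectivelyTzSClosed X) (h2 : ProjectivelyTzSDiscrete X) :
    Finite (slCon X).Quotient ∧ (viableIdems X).Finite := by
  obtain ⟨hcomm, hidem⟩ := slCon_isSemilatticeCon X
  have hfin : Finite (slCon X).Quotient :=
    h1.finite_quotient h2 (slCon X) (hasClopenBasis_of_compactSpace _)
      (downsetHom hcomm hidem) (downsetHom_injective hcomm hidem)
  refine ⟨hfin, Set.Finite.of_finite_image (f := ((↑) : X → (slCon X).Quotient))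
    (Set.toFinite _) ?_⟩
  intro e he f hf hef
  exact eq_of_slCon_of_mem_viableIdems he hf ((Con.eq _).1 hef)
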